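/- (Minimum distance of the extended Golay code) Let p = (1,0,1,0,0,0,1,1,1,0,1) ∈ (ZMod 2)^11, let Q be the 12 × 12 matrix over GF(2) whose row i, for 0 ≤ i ≤ 10, is (ρ^i(p), 1), where ρ^i(p) is the cyclic rotation of p to the right by i positions, and whose row 11 is (1,1,1,1,1,1,1,1,1,1,1,0), and let H₁ = (Q | I₁₂). Let G₂₄ = {x : Fin 24 → ZMod 2 | H₁ · x = 0}. Then every nonzero codeword of G₂₄ has Hamming weight at least 8, and there exists a codeword of G₂₄ of Hamming weight exactly 8; i.e., the minimum distance of G₂₄ is 8. -/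

import Mathlib

/-- The vector `p = (1,0,1,0,0,0,1,1,1,0,1)`. -/
def golayP : Fin 11 → ZMod 2 := ![1, 0, 1, 0, 0, 0, 1, 1, 1, 0, 1]

/-- Cyclic rotation to the right: `ρ(v) = (v₁₀, v₀, v₁, …, v₉)`. -/
def rotR (v : Fin 11 → ZMod 2) : Fin 11 → ZMod 2 := fun j => v (j - 1)

/-- The 12 × 12 matrix `Q`: for `0 ≤ i ≤ 10`, row `i` is `(ρ^i(p), 1)`, and
row 11 is `(1,1,1,1,1,1,1,1,1,1,1,0)`. -/
def golayQ : Matrix (Fin 12) (Fin 12) (ZMod 2) := fun i j =>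
  if _hi : (i : ℕ) < 11 then
    if hj : (j : ℕ) < 11 then (rotR^[(i : ℕ)] golayP) ⟨(j : ℕ), hj⟩ else 1
  else
    if (j : ℕ) < 11 then 1 else 0

/-- The 12 × 24 matrix `H₁ = (Q | I₁₂)`. -/
def golayH : Matrix (Fin 12) (Fin 24) (ZMod 2) := fun i j =>
  if hj : (j : ℕ) < 12 then golayQ i ⟨(j : ℕ), hj⟩
  else if (j : ℕ) - 12 = (i : ℕ) then 1 else 0

/-!
The code is `{(u, Q u)}` and `Qᵀ Q = 1`, so it is self-orthogonal:
`(u, Q u) ⬝ (u', Q u') = u ⬝ u' + u ⬝ Qᵀ Q u' = 0`. For binary vectors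
`wt (x + y) = wt x + wt y - 2 wt (x * y)` with `wt (x * y) ≡ x ⬝ y (mod 2)`, so on a
self-orthogonal code the weight is additive modulo 4; the generators `(eⱼ, Q eⱼ)` have weight 8
or 12, hence every codeword has weight divisible by 4. A codeword of weight 4 would have
`wt u ≤ 2` or `wt (Q u) ≤ 2`; since `u = Qᵀ (Q u)`, both are excluded by the weights of the
columns of `Q` and of `Qᵀ` and of the sums of two of them. Column 0 of `Q` has weight 7, which
gives the codeword `(e₀, Q e₀)` of weight 8.
-/

open Matrix Finset

section BinaryVectors

variable {ι : Type*} [Fintype ι]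

theorem natCast_hammingNorm_eq_sum (x : ι → ZMod 2) : (hammingNorm x : ZMod 2) = ∑ i, x i := by
  rw [hammingNorm, card_filter, Nat.cast_sum]
  have key : ∀ a : ZMod 2, ((if a ≠ 0 then 1 else 0 : ℕ) : ZMod 2) = a := by decide
  exact sum_congr rfl fun i _ => key (x i)

theorem dotProduct_eq_natCast_hammingNorm_mul (x y : ι → ZMod 2) :
    x ⬝ᵥ y = hammingNorm (x * y) := by
  rw [natCast_hammingNorm_eq_sum]
  rfl

theorem hammingNorm_add_add_two_mul_hammingNorm_mul (x y : ι → ZMod 2) :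
    hammingNorm (x + y) + 2 * hammingNorm (x * y) = hammingNorm x + hammingNorm y := by
  simp only [hammingNorm, card_filter, mul_sum, ← sum_add_distrib]
  have key : ∀ a b : ZMod 2, ((if a + b ≠ 0 then 1 else 0) + 2 * if a * b ≠ 0 then 1 else 0) =
      (if a ≠ 0 then 1 else 0) + if b ≠ 0 then 1 else 0 := by decide
  exact sum_congr rfl fun i _ => key (x i) (y i)

theorem four_dvd_hammingNorm_add {x y : ι → ZMod 2} (hxy : x ⬝ᵥ y = 0)
    (hx : 4 ∣ hammingNorm x) (hy : 4 ∣ hammingNorm y) : 4 ∣ hammingNorm (x + y) := by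
  rw [dotProduct_eq_natCast_hammingNorm_mul, ZMod.natCast_eq_zero_iff] at hxy
  have := hammingNorm_add_add_two_mul_hammingNorm_mul x y
  omega

variable [DecidableEq ι]

theorem hammingNorm_pi_single_one (i : ι) : hammingNorm (Pi.single i 1 : ι → ZMod 2) = 1 := by
  simp [hammingNorm, Pi.single_apply, filter_eq']

theorem eq_sum_pi_single_one (v : ι → ZMod 2) : v = ∑ i ∈ {i | v i ≠ 0}, Pi.single i 1 := by
  ext k
  rw [Finset.sum_apply]
  simp only [Pi.single_apply, sum_ite_eq, mem_filter, mem_univ, true_and]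
  have key : ∀ a : ZMod 2, a = if a ≠ 0 then 1 else 0 := by decide
  exact key (v k)

theorem le_hammingNorm_add_hammingNorm_mulVec {κ : Type*} [Fintype κ] {k : ℕ}
    (M : Matrix κ ι (ZMod 2)) (hcol : ∀ j, k ≤ 1 + hammingNorm (M.col j))
    (hpair : ∀ i j, i ≠ j → k ≤ 2 + hammingNorm (M.col i + M.col j))
    {v : ι → ZMod 2} (hv0 : v ≠ 0) (hv : hammingNorm v ≤ 2) :
    k ≤ hammingNorm v + hammingNorm (M *ᵥ v) := by
  have hpos := hammingNorm_pos_iff.mpr hv0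
  obtain h1 | h2 : hammingNorm v = 1 ∨ hammingNorm v = 2 := by omega
  · obtain ⟨i, hi⟩ := card_eq_one.mp h1
    rw [h1, eq_sum_pi_single_one v, hi, sum_singleton, mulVec_single_one]
    exact hcol i
  · obtain ⟨i, j, hij, hs⟩ := card_eq_two.mp h2
    rw [h2, eq_sum_pi_single_one v, hs, sum_pair hij, mulVec_add, mulVec_single_one,
      mulVec_single_one]
    exact hpair i j hij

end BinaryVectors

section Append

variable {m n : ℕ}

theorem hammingNorm_append {α : Type*} [Zero α] [DecidableEq α] (u : Fin m → α)
    (v : Fin n → α) : hammingNorm (Fin.append u v) = hammingNorm u + hammingNorm v := by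
  simp only [hammingNorm, card_filter, Fin.sum_univ_add, Fin.append_left, Fin.append_right]

theorem dotProduct_append {α : Type*} [AddCommMonoid α] [Mul α] (u u' : Fin m → α)
    (v v' : Fin n → α) : Fin.append u v ⬝ᵥ Fin.append u' v' = u ⬝ᵥ u' + v ⬝ᵥ v' := by
  simp only [dotProduct, Fin.sum_univ_add, Fin.append_left, Fin.append_right]

theorem append_add_append {α : Type*} [Add α] (u u' : Fin m → α) (v v' : Fin n → α) :
    Fin.append u v + Fin.append u' v' = Fin.append (u + u') (v + v') := by
  ext i
  refine Fin.addCases (fun i => ?_) (fun i => ?_) i <;> simp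

end Append

section SystematicCode

variable {k r : ℕ} (A : Matrix (Fin r) (Fin k) (ZMod 2))

def systematicEncode (u : Fin k → ZMod 2) : Fin (k + r) → ZMod 2 := Fin.append u (A *ᵥ u)

theorem hammingNorm_systematicEncode (u : Fin k → ZMod 2) :
    hammingNorm (systematicEncode A u) = hammingNorm u + hammingNorm (A *ᵥ u) :=
  hammingNorm_append _ _

theorem systematicEncode_zero : systematicEncode A 0 = 0 := by
  rw [← hammingNorm_eq_zero, hammingNorm_systematicEncode, mulVec_zero, hammingNorm_zero,
    hammingNorm_zero]

theorem systematicEncode_add (u u' : Fin k → ZMod 2) :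
    systematicEncode A (u + u') = systematicEncode A u + systematicEncode A u' := by
  rw [systematicEncode, systematicEncode, systematicEncode, append_add_append, mulVec_add]

variable {A}

theorem dotProduct_systematicEncode (hA : Aᵀ * A = 1) (u u' : Fin k → ZMod 2) :
    systematicEncode A u ⬝ᵥ systematicEncode A u' = 0 := by
  rw [systematicEncode, systematicEncode, dotProduct_append, ← dotProduct_transpose_mulVec,
    mulVec_mulVec, hA, one_mulVec, dotProduct_comm, CharTwo.add_self_eq_zero]

theorem four_dvd_hammingNorm_systematicEncode (hA : Aᵀ * A = 1)
    (hcol : ∀ j, 4 ∣ 1 + hammingNorm (A.col j)) (u : Fin k → ZMod 2) :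
    4 ∣ hammingNorm (systematicEncode A u) := by
  induction u using Pi.single_induction with
  | zero => simp [systematicEncode_zero]
  | add u u' hu hu' =>
    rw [systematicEncode_add]
    exact four_dvd_hammingNorm_add (dotProduct_systematicEncode hA u u') hu hu'
  | single j a =>
    obtain rfl | rfl : a = 0 ∨ a = 1 := by revert a; decide
    · simp [systematicEncode_zero]
    · rw [hammingNorm_systematicEncode, mulVec_single_one, hammingNorm_pi_single_one]
      exact hcol j

theorem eight_le_hammingNorm_systematicEncode (hA : Aᵀ * A = 1)
    (hcol : ∀ j, 4 ∣ 1 + hammingNorm (A.col j))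
    (hlow : ∀ v, v ≠ 0 → hammingNorm v ≤ 2 → 5 ≤ hammingNorm v + hammingNorm (A *ᵥ v))
    (hlow' : ∀ w, w ≠ 0 → hammingNorm w ≤ 2 → 5 ≤ hammingNorm w + hammingNorm (Aᵀ *ᵥ w))
    {u : Fin k → ZMod 2} (hu : u ≠ 0) : 8 ≤ hammingNorm (systematicEncode A u) := by
  have h4 := four_dvd_hammingNorm_systematicEncode hA hcol u
  have hpos := hammingNorm_pos_iff.mpr hu
  have hinv : Aᵀ *ᵥ (A *ᵥ u) = u := by rw [mulVec_mulVec, hA, one_mulVec]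
  rw [hammingNorm_systematicEncode] at h4 ⊢
  by_contra! hlt
  -- the weight is now `4`, so `u` or `A *ᵥ u` has weight at most `2`
  rcases le_or_gt (hammingNorm u) 2 with h | h
  · have := hlow u hu h
    omega
  · have hAu : A *ᵥ u ≠ 0 := fun h0 => hu (by rw [← hinv, h0, mulVec_zero])
    have := hlow' (A *ᵥ u) hAu (by omega)
    rw [hinv] at this
    omega

end SystematicCode

theorem golayQ_transpose_mul_self : golayQᵀ * golayQ = 1 := by decide

theorem golayH_row (i : Fin 12) :
    golayH i = Fin.append (golayQ i) ((1 : Matrix (Fin 12) (Fin 12) (ZMod 2)) i) := by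
  ext j
  refine Fin.addCases (m := 12) (n := 12) (fun j => ?_) (fun j => ?_) j
  · rw [Fin.append_left]
    simp [golayH]
  · rw [Fin.append_right]
    simp [golayH, one_apply, Fin.ext_iff, eq_comm]

theorem golayH_mulVec_append (u v : Fin 12 → ZMod 2) :
    golayH *ᵥ Fin.append u v = golayQ *ᵥ u + v := by
  ext i
  change golayH i ⬝ᵥ _ = golayQ i ⬝ᵥ u + v i
  rw [golayH_row, dotProduct_append]
  congr
  exact congrFun (one_mulVec v) i

theorem golayH_mulVec_eq_zero_iff {x : Fin 24 → ZMod 2} :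
    golayH *ᵥ x = 0 ↔ ∃ u, x = systematicEncode golayQ u := by
  constructor
  · intro hx
    obtain ⟨u, v, rfl⟩ : ∃ u v : Fin 12 → ZMod 2, x = Fin.append u v :=
      ⟨fun i => x (Fin.castAdd 12 i), fun i => x (Fin.natAdd 12 i),
        by rw [Fin.append_castAdd_natAdd]⟩
    rw [golayH_mulVec_append, CharTwo.add_eq_zero] at hx
    exact ⟨u, by rw [systematicEncode, hx]⟩
  · rintro ⟨u, rfl⟩
    rw [systematicEncode, golayH_mulVec_append, CharTwo.add_self_eq_zero]

theorem eight_le_hammingNorm_golay {u : Fin 12 → ZMod 2} (hu : u ≠ 0) :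
    8 ≤ hammingNorm (systematicEncode golayQ u) := by
  refine eight_le_hammingNorm_systematicEncode golayQ_transpose_mul_self (by decide)
    (fun v hv0 hv => ?_) (fun w hw0 hw => ?_) hu
  · exact le_hammingNorm_add_hammingNorm_mulVec _ (by decide) (by decide) hv0 hv
  · exact le_hammingNorm_add_hammingNorm_mulVec _ (by decide) (by decide) hw0 hw

/-- The minimum distance of the extended Golay code `G₂₄ = {x | H₁ · x = 0}` is 8:
every nonzero codeword has Hamming weight at least 8, and some codeword has weight
exactly 8. -/
theorem stmt_12 :
    (∀ x : Fin 24 → ZMod 2, golayH.mulVec x = 0 → x ≠ 0 → 8 ≤ hammingNorm x) ∧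
      ∃ x : Fin 24 → ZMod 2, golayH.mulVec x = 0 ∧ hammingNorm x = 8 := by
  refine ⟨fun x hx hx0 => ?_, systematicEncode golayQ (Pi.single 0 1),
    golayH_mulVec_eq_zero_iff.mpr ⟨_, rfl⟩, ?_⟩
  · obtain ⟨u, rfl⟩ := golayH_mulVec_eq_zero_iff.mp hx
    exact eight_le_hammingNorm_golay (by rintro rfl; exact hx0 (systematicEncode_zero _))
  · rw [hammingNorm_systematicEncode, hammingNorm_pi_single_one, mulVec_single_one]
    decide
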